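/- Under the Volterra map u_i = exp(p_i + (1/2)(q_{i+1} - q_{i-1})) (with q_0 = q_{2n} = 0), the canonical Hamiltonian system q̇_i = ∂h_1/∂p_i, ṗ_i = -∂h_1/∂q_i with h_1(q,p) = Σ_{i=1}^{2n-1} exp(p_i + (1/2)(q_{i+1} - q_{i-1})) projects to the KM system: if (q(t), p(t)) solves the canonical equations and u_i(t) = exp(p_i(t) + (1/2)(q_{i+1}(t) - q_{i-1}(t))), then u̇_i = u_i(u_{i+1} - u_{i-1}) with u_0 = u_{2n} = 0. -/

import Mathlib

/-- The Hamiltonian `h₁(q,p) = ∑_{i=1}^{2n-1} exp(pᵢ + (1/2)(qᵢ₊₁ - qᵢ₋₁))`. -/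
noncomputable def h1Ham (n : ℕ) (q p : ℕ → ℝ) : ℝ :=
  ∑ i ∈ Finset.Icc 1 (2 * n - 1), Real.exp (p i + (q (i + 1) - q (i - 1)) / 2)

/-!
Writing `u` for the Volterra variables, `∂h₁/∂pᵢ = uᵢ` and `∂h₁/∂qᵢ = (uᵢ₋₁ - uᵢ₊₁)/2`, so the
canonical equations read `q̇ⱼ = uⱼ` (also at the ends `j = 0, 2n`, where both sides vanish) and
`ṗᵢ = (uᵢ₊₁ - uᵢ₋₁)/2`. The chain rule for `uᵢ = exp(pᵢ + (qᵢ₊₁ - qᵢ₋₁)/2)` then gives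
`u̇ᵢ = uᵢ (ṗᵢ + (q̇ᵢ₊₁ - q̇ᵢ₋₁)/2) = uᵢ (uᵢ₊₁ - uᵢ₋₁)`.
-/

open Finset

theorem hasDerivAt_update_apply {ι 𝕜 : Type*} [DecidableEq ι] [NontriviallyNormedField 𝕜]
    (x : ι → 𝕜) (i j : ι) (y : 𝕜) :
    HasDerivAt (fun t => Function.update x i t j) (if j = i then 1 else 0) y := by
  by_cases hji : j = i
  · subst hji
    simpa using hasDerivAt_id' y
  · simpa [Function.update_of_ne hji, hji] using hasDerivAt_const y (x j)

/-- The Volterra map, extended by `uᵢ = 0` outside `1 ≤ i ≤ 2n - 1`. -/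
noncomputable def volterraU (n : ℕ) (q p : ℕ → ℝ) (i : ℕ) : ℝ :=
  if 1 ≤ i ∧ i ≤ 2 * n - 1 then Real.exp (p i + (q (i + 1) - q (i - 1)) / 2) else 0

namespace volterraU

variable {n : ℕ} {q p : ℕ → ℝ}

theorem eq_of_mem {i : ℕ} (hi : i ∈ Icc 1 (2 * n - 1)) :
    volterraU n q p i = Real.exp (p i + (q (i + 1) - q (i - 1)) / 2) :=
  if_pos (mem_Icc.mp hi)

theorem eq_zero_of_notMem {i : ℕ} (hi : i ∉ Icc 1 (2 * n - 1)) : volterraU n q p i = 0 :=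
  if_neg fun h => hi (mem_Icc.mpr h)

theorem sum_mul_ite_eq (k : ℕ) :
    ∑ j ∈ Icc 1 (2 * n - 1),
      Real.exp (p j + (q (j + 1) - q (j - 1)) / 2) * (if j = k then 1 else 0) =
      volterraU n q p k := by
  simp only [mul_ite, mul_one, mul_zero, sum_ite_eq']
  split_ifs with hk
  · exact (eq_of_mem hk).symm
  · exact (eq_zero_of_notMem hk).symm

end volterraU

theorem hasDerivAt_h1Ham_update_p (n i : ℕ) (q p : ℕ → ℝ) :
    HasDerivAt (fun x => h1Ham n q (Function.update p i x)) (volterraU n q p i) (p i) := by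
  have hterm : ∀ j ∈ Icc 1 (2 * n - 1),
      HasDerivAt (fun x => Real.exp (Function.update p i x j + (q (j + 1) - q (j - 1)) / 2))
        (Real.exp (p j + (q (j + 1) - q (j - 1)) / 2) * (if j = i then 1 else 0)) (p i) := by
    intro j _
    simpa using ((hasDerivAt_update_apply p i j (p i)).add_const _).exp
  have hsum := HasDerivAt.fun_sum hterm
  rwa [volterraU.sum_mul_ite_eq] at hsum

/-- `qᵢ` enters only the summands `i - 1` (with weight `1/2`) and `i + 1` (with weight `-1/2`). -/
theorem hasDerivAt_h1Ham_update_q (n i : ℕ) (q p : ℕ → ℝ) :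
    HasDerivAt (fun x => h1Ham n (Function.update q i x) p)
      ((volterraU n q p (i - 1) - volterraU n q p (i + 1)) / 2) (q i) := by
  have hterm : ∀ j ∈ Icc 1 (2 * n - 1),
      HasDerivAt
        (fun x => Real.exp (p j + (Function.update q i x (j + 1) -
          Function.update q i x (j - 1)) / 2))
        ((Real.exp (p j + (q (j + 1) - q (j - 1)) / 2) * (if j = i - 1 then 1 else 0) -
          Real.exp (p j + (q (j + 1) - q (j - 1)) / 2) * (if j = i + 1 then 1 else 0)) / 2)
        (q i) := by
    intro j hj
    have hj1 : 1 ≤ j := (mem_Icc.mp hj).1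
    have hshift : (j + 1 = i ↔ j = i - 1) ∧ (j - 1 = i ↔ j = i + 1) := by omega
    have h := (((hasDerivAt_update_apply q i (j + 1) (q i)).fun_sub
      (hasDerivAt_update_apply q i (j - 1) (q i))).div_const 2).const_add (p j) |>.exp
    simp only [Function.update_eq_self, hshift] at h
    convert h using 1
    ring
  have hsum := HasDerivAt.fun_sum hterm
  rwa [← sum_div, sum_sub_distrib, volterraU.sum_mul_ite_eq, volterraU.sum_mul_ite_eq] at hsum

theorem volterra_realization_projects_to_km_general (n : ℕ) (q p : ℝ → ℕ → ℝ)
    (hq0 : ∀ t, q t 0 = 0) (hq2n : ∀ t, q t (2 * n) = 0)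
    (hqdot : ∀ t : ℝ, ∀ i ∈ Finset.Icc 1 (2 * n - 1),
      HasDerivAt (fun s => q s i)
        (deriv (fun x => h1Ham n (q t) (Function.update (p t) i x)) (p t i)) t)
    (hpdot : ∀ t : ℝ, ∀ i ∈ Finset.Icc 1 (2 * n - 1),
      HasDerivAt (fun s => p s i)
        (-(deriv (fun x => h1Ham n (Function.update (q t) i x) (p t)) (q t i))) t)
    (u : ℝ → ℕ → ℝ)
    (hu : ∀ t i, u t i = if 1 ≤ i ∧ i ≤ 2 * n - 1
      then Real.exp (p t i + (q t (i + 1) - q t (i - 1)) / 2) else 0) :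
    ∀ t : ℝ, ∀ i ∈ Finset.Icc 1 (2 * n - 1),
      HasDerivAt (fun s => u s i) (u t i * (u t (i + 1) - u t (i - 1))) t := by
  have hu : ∀ t, u t = volterraU n (q t) (p t) := fun t => funext (hu t)
  intro t i hi
  have hq : ∀ j ≤ 2 * n, HasDerivAt (fun s => q s j) (u t j) t := by
    intro j hj
    by_cases hj' : j ∈ Icc 1 (2 * n - 1)
    · simpa [hu, (hasDerivAt_h1Ham_update_p n j (q t) (p t)).deriv] using hqdot t j hj'
    · have hboundary : j = 0 ∨ j = 2 * n := by grind
      have hq_const : (fun s => q s j) = fun _ => 0 := by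
        rcases hboundary with rfl | rfl
        exacts [funext hq0, funext hq2n]
      rw [hq_const, hu, volterraU.eq_zero_of_notMem hj']
      exact hasDerivAt_const t 0
  have hp : HasDerivAt (fun s => p s i) ((u t (i + 1) - u t (i - 1)) / 2) t := by
    have h := hpdot t i hi
    rw [(hasDerivAt_h1Ham_update_q n i (q t) (p t)).deriv, ← hu] at h
    convert h using 1
    ring
  have hi_le : i + 1 ≤ 2 * n := by grind
  simp only [hu, volterraU.eq_of_mem hi] at hp hq ⊢
  convert (hp.fun_add
    (((hq (i + 1) hi_le).fun_sub (hq (i - 1) (by omega))).div_const 2)).exp using 1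
  ring

/-- The canonical Hamiltonian system `q̇ᵢ = ∂h₁/∂pᵢ`, `ṗᵢ = -∂h₁/∂qᵢ` projects,
under the Volterra map `uᵢ = exp(pᵢ + (1/2)(qᵢ₊₁ - qᵢ₋₁))` (`q₀ = q_{2n} = 0`),
to the KM system `u̇ᵢ = uᵢ(uᵢ₊₁ - uᵢ₋₁)` with `u₀ = u_{2n} = 0`. -/
theorem volterra_realization_projects_to_km (n : ℕ) (hn : 0 < n) (q p : ℝ → ℕ → ℝ)
    (hq0 : ∀ t, q t 0 = 0) (hq2n : ∀ t, q t (2 * n) = 0)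
    (hqdot : ∀ t : ℝ, ∀ i ∈ Finset.Icc 1 (2 * n - 1),
      HasDerivAt (fun s => q s i)
        (deriv (fun x => h1Ham n (q t) (Function.update (p t) i x)) (p t i)) t)
    (hpdot : ∀ t : ℝ, ∀ i ∈ Finset.Icc 1 (2 * n - 1),
      HasDerivAt (fun s => p s i)
        (-(deriv (fun x => h1Ham n (Function.update (q t) i x) (p t)) (q t i))) t)
    (u : ℝ → ℕ → ℝ)
    (hu : ∀ t i, u t i = if 1 ≤ i ∧ i ≤ 2 * n - 1
      then Real.exp (p t i + (q t (i + 1) - q t (i - 1)) / 2) else 0) :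
    ∀ t : ℝ, ∀ i ∈ Finset.Icc 1 (2 * n - 1),
      HasDerivAt (fun s => u s i) (u t i * (u t (i + 1) - u t (i - 1))) t :=
  volterra_realization_projects_to_km_general n q p hq0 hq2n hqdot hpdot u hu
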